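/- If n has binary representation 1^b 0 1^c (i.e., n = (2^b - 1)·2^{c+1} + 2^c - 1) with b ≥ 1 and c ≥ 0, then s(n) = c - b. -/
import Mathlib


def s : ℕ → ℤ
  | 0 => 0
  | n + 1 =>
    if (n + 1) % 2 = 0 then -s ((n + 1) / 2)
    else s (n / 2) + 1
decreasing_by all_goals omega

lemma s_odd (n : ℕ) : s (2 * n + 1) = s n + 1 := by
  show s (2 * n + 1) = _
  rw [s]
  have h1 : (2 * n + 1) % 2 = 1 := by omega
  simp [h1]

lemma s_even (n : ℕ) : s (2 * (n + 1)) = - s (n + 1) := by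
  have : 2 * (n + 1) = (2 * n + 1) + 1 := by ring
  rw [this, s]
  have h1 : (2 * n + 1 + 1) % 2 = 0 := by omega
  simp [h1]
  congr 1
  omega

lemma s_ones (b : ℕ) : s (2 ^ b - 1) = b := by
  induction b with
  | zero => simp [s]
  | succ k ih =>
    have h : 2 ^ (k + 1) - 1 = 2 * (2 ^ k - 1) + 1 := by
      have : 1 ≤ 2 ^ k := Nat.one_le_two_pow
      omega
    rw [h, s_odd, ih]
    push_cast
    ring

theorem stmt4 (b c : ℕ) (hb : 1 ≤ b) : s ((2 ^ b - 1) * 2 ^ (c + 1) + 2 ^ c - 1) = (c : ℤ) - b := by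
  induction c with
  | zero =>
    have hp : 1 ≤ 2 ^ b := Nat.one_le_two_pow
    have h2 : 2 ≤ 2 ^ b := by
      calc 2 = 2 ^ 1 := rfl
      _ ≤ 2 ^ b := Nat.pow_le_pow_right (by norm_num) hb
    have h : (2 ^ b - 1) * 2 ^ (0 + 1) + 2 ^ 0 - 1 = 2 * ((2 ^ b - 2) + 1) := by
      ring_nf; omega
    rw [h, s_even]
    have h3 : 2 ^ b - 2 + 1 = 2 ^ b - 1 := by omega
    rw [h3, s_ones]
    push_cast
    ring
  | succ k ih =>
    have hp : 1 ≤ 2 ^ b := Nat.one_le_two_pow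
    have hk : 1 ≤ 2 ^ k := Nat.one_le_two_pow
    have h : (2 ^ b - 1) * 2 ^ (k + 1 + 1) + 2 ^ (k + 1) - 1
        = 2 * ((2 ^ b - 1) * 2 ^ (k + 1) + 2 ^ k - 1) + 1 := by
      have e1 : 2 ^ (k + 1 + 1) = 2 * 2 ^ (k + 1) := by ring
      have e2 : 2 ^ (k + 1) = 2 * 2 ^ k := by ring
      rw [e1, e2]
      have h2 : 2 ≤ 2 ^ b := by
        calc 2 = 2 ^ 1 := rfl
        _ ≤ 2 ^ b := Nat.pow_le_pow_right (by norm_num) hb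
      have hbk : 1 ≤ (2 ^ b - 1) * (2 * 2 ^ k) :=
        Nat.one_le_iff_ne_zero.mpr (Nat.mul_ne_zero (by omega) (by positivity))
      have e3 : (2 ^ b - 1) * (2 * (2 * 2 ^ k)) = 2 * ((2 ^ b - 1) * (2 * 2 ^ k)) := by ring
      omega
    rw [h, s_odd, ih]
    push_cast
    ring
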